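/- arXiv:1707.06584 — 4 statements merged into one kernel-verified Lean document; each statement's English description precedes it below -/
import Mathlib

section
/- Let N be a positive trace-preserving linear map on matrices, with adjoint N† (with respect to the Hilbert–Schmidt inner product). For any density matrix ρ with ρ > 0 and N(ρ) > 0, the entropy change satisfies S(N(ρ)) − S(ρ) ≥ D(ρ ‖ N†(N(ρ))), where S is von Neumann entropy and D is quantum relative entropy. -/
open scoped Matrix Kronecker ComplexOrder

open Matrix in
noncomputable def matFun {n : Type*} [Fintype n] [DecidableEq n]
    (f : ℝ → ℝ) (A : Matrix n n ℂ) : Matrix n n ℂ :=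
  if hA : A.IsHermitian then
    (hA.eigenvectorUnitary : Matrix n n ℂ) *
      Matrix.diagonal (fun i => (f (hA.eigenvalues i) : ℂ)) *
      star (hA.eigenvectorUnitary : Matrix n n ℂ)
  else 0

noncomputable def matLog {n : Type*} [Fintype n] [DecidableEq n]
    (A : Matrix n n ℂ) : Matrix n n ℂ := matFun Real.log A

noncomputable def vnEntropy {n : Type*} [Fintype n] [DecidableEq n]
    (ρ : Matrix n n ℂ) : ℝ := -(Matrix.trace (ρ * matLog ρ)).re

noncomputable def relEnt {n : Type*} [Fintype n] [DecidableEq n]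
    (ρ σ : Matrix n n ℂ) : ℝ := (Matrix.trace (ρ * (matLog ρ - matLog σ))).re

noncomputable def matAbs {m n : Type*} [Fintype m] [Fintype n] [DecidableEq n]
    (A : Matrix m n ℂ) : Matrix n n ℂ := matFun Real.sqrt (Aᴴ * A)

noncomputable def traceNorm {m n : Type*} [Fintype m] [Fintype n] [DecidableEq n]
    (A : Matrix m n ℂ) : ℝ := (Matrix.trace (matAbs A)).re

noncomputable def schattenNorm {m n : Type*} [Fintype m] [Fintype n] [DecidableEq n]
    (p : ℝ) (A : Matrix m n ℂ) : ℝ :=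
  (Matrix.trace (matFun (fun x => x ^ p) (matAbs A))).re ^ (1 / p)

noncomputable def specSup {n : Type*} [Fintype n] [DecidableEq n]
    (A : Matrix n n ℂ) : ℝ :=
  if hA : A.IsHermitian then sSup (Set.range hA.eigenvalues) else 0

noncomputable def opNorm {m n : Type*} [Fintype m] [Fintype n] [DecidableEq n]
    (A : Matrix m n ℂ) : ℝ := specSup (matAbs A)

/-
The inequality is equivalent to `Tr (A log A) ≤ Tr (ρ log B)` with `A = N ρ` and `B = N† A`.
Write `A = ∑ λᵢ Pᵢ` and `B = ∑ μⱼ Rⱼ` spectrally and put `dⱼ = Tr (ρ Rⱼ)`. The adjoint `N†` is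
positive and unital, so `Qᵢ = N† Pᵢ` is a positive partition of unity with
`B + t = ∑ (λᵢ + t) Qᵢ`, and Choi's inequality gives `(B + t)⁻¹ ≤ ∑ (λᵢ + t)⁻¹ Qᵢ = N† ((A + t)⁻¹)`.
Pairing with `ρ` yields `∑ dⱼ / (μⱼ + t) ≤ ∑ λᵢ / (λᵢ + t)` for all `t > 0`; integrating in `t`
(`log x = ∫₀^∞ (1 / (1 + t) - 1 / (x + t)) dt`, here via the monotonicity of its antiderivative)
gives `∑ λᵢ log λᵢ ≤ ∑ dⱼ log μⱼ`, which is the claim.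
-/

open Filter Real Topology

lemma hasDerivAt_sum_mul_log_add {ι : Type*} [Fintype ι] (w x : ι → ℝ) {t : ℝ}
    (h : ∀ i, 0 < x i + t) :
    HasDerivAt (fun s => ∑ i, w i * log (x i + s)) (∑ i, w i * (x i + t)⁻¹) t := by
  refine HasDerivAt.fun_sum fun i _ => ((((hasDerivAt_id t).const_add (x i)).log ?_).const_mul
    (w i)).congr_deriv ?_
  · exact (h i).ne'
  · simp [div_eq_mul_inv]

lemma tendsto_sum_mul_log_add_sub_mul_log {ι : Type*} [Fintype ι] (w x : ι → ℝ) :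
    Tendsto (fun s => ∑ i, w i * log (x i + s) - (∑ i, w i) * log s) atTop (𝓝 0) := by
  have h := tendsto_finsetSum Finset.univ fun i _ =>
    (tendsto_log_comp_add_sub_log (x i)).const_mul (w i)
  simp only [mul_zero, Finset.sum_const_zero] at h
  refine h.congr fun s => ?_
  simp only [mul_sub, Finset.sum_sub_distrib, Finset.sum_mul, add_comm s]

theorem sum_mul_log_le_of_forall_sum_mul_inv_add_le {ι κ : Type*} [Fintype ι] [Fintype κ]
    {c lam : ι → ℝ} {d mu : κ → ℝ} (hlam : ∀ i, 0 < lam i) (hmu : ∀ j, 0 < mu j)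
    (hsum : ∑ i, c i = ∑ j, d j)
    (hres : ∀ t > 0, ∑ j, d j * (mu j + t)⁻¹ ≤ ∑ i, c i * (lam i + t)⁻¹) :
    ∑ i, c i * log (lam i) ≤ ∑ j, d j * log (mu j) := by
  set G : ℝ → ℝ := fun s => ∑ j, d j * log (mu j + s) - ∑ i, c i * log (lam i + s)
  have hG : ∀ t ≥ 0, HasDerivAt G
      (∑ j, d j * (mu j + t)⁻¹ - ∑ i, c i * (lam i + t)⁻¹) t := fun t ht =>
    (hasDerivAt_sum_mul_log_add d mu fun j => by linarith [hmu j]).sub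
      (hasDerivAt_sum_mul_log_add c lam fun i => by linarith [hlam i])
  have hanti : AntitoneOn G (Set.Ici 0) := by
    refine antitoneOn_of_deriv_nonpos (convex_Ici 0)
      (fun t ht => (hG t ht).continuousAt.continuousWithinAt) ?_ ?_ <;>
      rw [interior_Ici] <;> intro t (ht : 0 < t)
    · exact (hG t ht.le).differentiableAt.differentiableWithinAt
    · rw [(hG t ht.le).deriv]
      linarith [hres t ht]
  have hlim : Tendsto G atTop (𝓝 0) := by
    have := (tendsto_sum_mul_log_add_sub_mul_log d mu).sub
      (tendsto_sum_mul_log_add_sub_mul_log c lam)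
    rw [sub_zero] at this
    refine this.congr fun s => ?_
    simp only [G, hsum]
    ring
  have h0 : 0 ≤ G 0 := le_of_tendsto hlim <| eventually_atTop.2
    ⟨0, fun t ht => hanti Set.self_mem_Ici ht ht⟩
  simpa [G] using h0

namespace Matrix.IsHermitian

variable {n : Type*} [Fintype n] [DecidableEq n] {H : Matrix n n ℂ}

noncomputable def spectralProj (hH : H.IsHermitian) (i : n) : Matrix n n ℂ :=
  (hH.eigenvectorUnitary : Matrix n n ℂ) * single i i 1 *
    star (hH.eigenvectorUnitary : Matrix n n ℂ)

lemma matFun_eq (hH : H.IsHermitian) (f : ℝ → ℝ) :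
    matFun f H = (hH.eigenvectorUnitary : Matrix n n ℂ) *
      diagonal (fun i => (f (hH.eigenvalues i) : ℂ)) *
      star (hH.eigenvectorUnitary : Matrix n n ℂ) :=
  dif_pos hH

lemma matFun_eq_sum (hH : H.IsHermitian) (f : ℝ → ℝ) :
    matFun f H = ∑ i, f (hH.eigenvalues i) • hH.spectralProj i := by
  simp only [hH.matFun_eq, spectralProj, ← sum_single_eq_diagonal, Matrix.mul_sum, Matrix.sum_mul]
  refine Finset.sum_congr rfl fun i _ => ?_
  rw [← Matrix.smul_mul, ← Matrix.mul_smul, smul_single, Complex.real_smul, mul_one]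

lemma sum_spectralProj (hH : H.IsHermitian) : ∑ i, hH.spectralProj i = 1 := by
  simp only [spectralProj, ← Matrix.mul_sum, ← Matrix.sum_mul, sum_single_one, Matrix.mul_one]
  exact Unitary.coe_mul_star_self _

lemma spectralProj_posSemidef (hH : H.IsHermitian) (i : n) : (hH.spectralProj i).PosSemidef := by
  rw [spectralProj, ← diagonal_single]
  refine (posSemidef_diagonal_iff.2 fun j => ?_).mul_mul_conjTranspose_same _
  rcases eq_or_ne j i with rfl | h <;> simp [*]

lemma posSemidef_matFun (hH : H.IsHermitian) {f : ℝ → ℝ} (hf : ∀ i, 0 ≤ f (hH.eigenvalues i)) :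
    (matFun f H).PosSemidef := by
  rw [hH.matFun_eq]
  exact (posSemidef_diagonal_iff.2 fun i =>
    Complex.zero_le_real.2 (hf i)).mul_mul_conjTranspose_same _

lemma matFun_mul (hH : H.IsHermitian) (f g : ℝ → ℝ) :
    matFun f H * matFun g H = matFun (fun x => f x * g x) H := by
  simp only [hH.matFun_eq, Matrix.mul_assoc]
  rw [← Matrix.mul_assoc (star _) (_ : Matrix n n ℂ), Unitary.coe_star_mul_self, Matrix.one_mul,
    ← Matrix.mul_assoc (diagonal _), diagonal_mul_diagonal]
  simp only [Complex.ofReal_mul]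

lemma matFun_id (hH : H.IsHermitian) : matFun id H = H := by
  rw [hH.matFun_eq]
  conv_rhs => rw [hH.spectral_theorem, Unitary.conjStarAlgAut_apply]
  rfl

lemma sum_eigenvalues_smul_spectralProj (hH : H.IsHermitian) :
    ∑ i, hH.eigenvalues i • hH.spectralProj i = H :=
  (hH.matFun_eq_sum id).symm.trans hH.matFun_id

lemma matFun_one (hH : H.IsHermitian) : matFun (fun _ => 1) H = 1 := by
  simp only [hH.matFun_eq_sum, one_smul, hH.sum_spectralProj]

lemma matFun_add_const (hH : H.IsHermitian) (t : ℝ) : matFun (fun x => x + t) H = H + t • 1 := by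
  simp only [hH.matFun_eq_sum, add_smul, Finset.sum_add_distrib,
    hH.sum_eigenvalues_smul_spectralProj, ← Finset.smul_sum, hH.sum_spectralProj]

lemma trace_matFun (hH : H.IsHermitian) (f : ℝ → ℝ) :
    trace (matFun f H) = ∑ i, (f (hH.eigenvalues i) : ℂ) := by
  rw [hH.matFun_eq, trace_mul_cycle, Unitary.coe_star_mul_self, Matrix.one_mul, trace_diagonal]

lemma trace_mul_matFun_self (hH : H.IsHermitian) (f : ℝ → ℝ) :
    trace (H * matFun f H) = ∑ i, ((hH.eigenvalues i * f (hH.eigenvalues i) : ℝ) : ℂ) := by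
  nth_rw 1 [← hH.matFun_id]
  rw [hH.matFun_mul, hH.trace_matFun]
  rfl

lemma re_trace_mul_matFun (hH : H.IsHermitian) (M : Matrix n n ℂ) (f : ℝ → ℝ) :
    (trace (M * matFun f H)).re =
      ∑ i, (trace (M * hH.spectralProj i)).re * f (hH.eigenvalues i) := by
  simp [hH.matFun_eq_sum f, Matrix.mul_sum, trace_sum, Complex.re_sum, mul_comm]

end Matrix.IsHermitian

open scoped MatrixOrder

namespace Matrix

variable {m n : Type*}

lemma posSemidef_of_forall_dotProduct_mulVec_nonneg [Fintype n] [DecidableEq n]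
    {A : Matrix n n ℂ} (h : ∀ x, 0 ≤ star x ⬝ᵥ A *ᵥ x) : A.PosSemidef := by
  rw [← isPositive_toEuclideanLin_iff, LinearMap.isPositive_iff_complex]
  intro x
  have key : inner ℂ (A.toEuclideanLin x) x = star (star x.ofLp ⬝ᵥ A *ᵥ x.ofLp) := by
    rw [EuclideanSpace.inner_eq_star_dotProduct, star_dotProduct, star_star, dotProduct_comm]
    rfl
  obtain ⟨hre, him⟩ := Complex.nonneg_iff.1 (h x.ofLp)
  rw [key]
  exact ⟨Complex.ext (by simp) (by simp [← him]), by simpa using hre⟩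

lemma dotProduct_mulVec_eq_trace_mul_vecMulVec [Fintype n] (M : Matrix n n ℂ) (x : n → ℂ) :
    star x ⬝ᵥ M *ᵥ x = trace (M * vecMulVec x (star x)) := by
  rw [mul_vecMulVec, trace_vecMulVec, dotProduct_comm]

lemma PosSemidef.trace_mul_nonneg [Fintype n] [DecidableEq n] {P Q : Matrix n n ℂ}
    (hP : P.PosSemidef) (hQ : Q.PosSemidef) : 0 ≤ trace (P * Q) := by
  obtain ⟨S, rfl⟩ := CStarAlgebra.nonneg_iff_eq_star_mul_self.1 hQ.nonneg
  rw [← Matrix.mul_assoc, trace_mul_cycle]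
  exact (hP.mul_mul_conjTranspose_same S).trace_nonneg

lemma PosSemidef.trace_mul_mono [Fintype n] [DecidableEq n] {ρ X Y : Matrix n n ℂ}
    (hρ : ρ.PosSemidef) (hXY : X ≤ Y) : trace (ρ * X) ≤ trace (ρ * Y) := by
  rw [← sub_nonneg, ← trace_sub, ← Matrix.mul_sub]
  exact hρ.trace_mul_nonneg hXY

lemma PosDef.map_of_map_one [DecidableEq n] [Fintype m] [DecidableEq m] {A : Matrix m m ℂ}
    (hA : A.PosDef) (Φ : Matrix m m ℂ →ₗ[ℂ] Matrix n n ℂ)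
    (hΦ : ∀ Y, Y.PosSemidef → (Φ Y).PosSemidef) (hΦ1 : Φ 1 = 1) : (Φ A).PosDef := by
  obtain hm | hm := isEmpty_or_nonempty m
  · rw [Subsingleton.elim A 1, hΦ1]
    exact PosDef.one
  obtain ⟨r, hr, hrA⟩ := (CFC.exists_pos_algebraMap_le_iff hA.isHermitian.isSelfAdjoint).2
    fun x hx => hA.isStrictlyPositive.spectrum_pos hx
  rw [Algebra.algebraMap_eq_smul_one, le_iff] at hrA
  have h := hΦ _ hrA
  rw [map_sub, LinearMap.map_smul_of_tower, hΦ1] at h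
  simpa using PosDef.posSemidef_add h (PosDef.one.smul hr)

theorem le_sum_inv_smul_of_mul_sum_smul_mul_eq [Fintype n] [DecidableEq n] {ι : Type*}
    [Fintype ι] {Q : ι → Matrix n n ℂ} (hQ : ∀ i, (Q i).PosSemidef) (hQ1 : ∑ i, Q i = 1) {a : ι → ℝ}
    (ha : ∀ i, 0 < a i) {C : Matrix n n ℂ} (hC : C.IsHermitian)
    (hCXC : C * (∑ i, a i • Q i) * C = C) :
    C ≤ ∑ i, (a i)⁻¹ • Q i := by
  -- The difference is the sum of the positive terms `aᵢ • (aᵢ⁻¹ - C)ᴴ Qᵢ (aᵢ⁻¹ - C)`.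
  have hterm : ∀ i, a i • (((a i)⁻¹ • 1 - C)ᴴ * Q i * ((a i)⁻¹ • 1 - C)) =
      (a i)⁻¹ • Q i - Q i * C - C * Q i + C * (a i • Q i) * C := by
    intro i
    rw [conjTranspose_sub, conjTranspose_smul, conjTranspose_one, hC.eq, star_trivial]
    simp only [sub_mul, mul_sub, smul_mul_assoc, mul_smul_comm, one_mul, mul_one, smul_sub,
      smul_smul, mul_inv_cancel₀ (ha i).ne', mul_inv_cancel_left₀ (ha i).ne', one_smul]
    abel
  have hsum : ∑ i, (a i)⁻¹ • Q i - C =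
      ∑ i, a i • (((a i)⁻¹ • 1 - C)ᴴ * Q i * ((a i)⁻¹ • 1 - C)) := by
    simp only [hterm, Finset.sum_add_distrib, Finset.sum_sub_distrib, ← Finset.sum_mul,
      ← Finset.mul_sum, hQ1, Matrix.one_mul, Matrix.mul_one, hCXC]
    abel
  rw [le_iff, hsum]
  exact posSemidef_sum Finset.univ fun i _ =>
    ((hQ i).conjTranspose_mul_mul_same _).smul (ha i).le

end Matrix

open Matrix

section PositiveMaps

variable {m n : Type*} [Fintype m] [DecidableEq m] [Fintype n] [DecidableEq n]

-- Choi's inequality `(Φ A + t)⁻¹ ≤ Φ ((A + t)⁻¹)` for a positive unital map `Φ`.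
theorem matFun_inv_add_map_le_map_matFun_inv_add (Φ : Matrix m m ℂ →ₗ[ℂ] Matrix n n ℂ)
    (hΦ : ∀ Y, Y.PosSemidef → (Φ Y).PosSemidef) (hΦ1 : Φ 1 = 1) {A : Matrix m m ℂ}
    (hA : A.PosSemidef) {t : ℝ} (ht : 0 < t) :
    matFun (fun x => (x + t)⁻¹) (Φ A) ≤ Φ (matFun (fun x => (x + t)⁻¹) A) := by
  have hB := hΦ A hA
  set Q := fun i => Φ (hA.isHermitian.spectralProj i)
  have hmap : ∀ f : ℝ → ℝ, Φ (matFun f A) = ∑ i, f (hA.isHermitian.eigenvalues i) • Q i := by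
    intro f
    simp only [hA.isHermitian.matFun_eq_sum, map_sum, LinearMap.map_smul_of_tower, Q]
  have hX : ∑ i, (hA.isHermitian.eigenvalues i + t) • Q i = matFun (fun x => x + t) (Φ A) := by
    rw [← hmap fun x => x + t, hA.isHermitian.matFun_add_const, hB.isHermitian.matFun_add_const,
      map_add, LinearMap.map_smul_of_tower, hΦ1]
  rw [hmap]
  refine le_sum_inv_smul_of_mul_sum_smul_mul_eq
    (fun i => hΦ _ (hA.isHermitian.spectralProj_posSemidef i))
    (by rw [← map_sum, hA.isHermitian.sum_spectralProj, hΦ1])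
    (fun i => by linarith [hA.eigenvalues_nonneg i])
    (hB.isHermitian.posSemidef_matFun fun j => ?_).isHermitian ?_
  · exact inv_nonneg.2 (by linarith [hB.eigenvalues_nonneg j])
  · rw [hX, hB.isHermitian.matFun_mul, hB.isHermitian.matFun_mul]
    congr 1
    funext x
    simpa using mul_inv_mul_cancel (x + t)⁻¹

variable (N : Matrix n n ℂ →ₗ[ℂ] Matrix m m ℂ) (Nadj : Matrix m m ℂ →ₗ[ℂ] Matrix n n ℂ)

lemma posSemidef_adjoint (hadj : ∀ X Y, trace (Yᴴ * N X) = trace ((Nadj Y)ᴴ * X))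
    (hpos : ∀ A, A.PosSemidef → (N A).PosSemidef) {Y : Matrix m m ℂ} (hY : Y.PosSemidef) :
    (Nadj Y).PosSemidef := by
  have h : (Nadj Y)ᴴ.PosSemidef := posSemidef_of_forall_dotProduct_mulVec_nonneg fun x => by
    rw [dotProduct_mulVec_eq_trace_mul_vecMulVec, ← hadj, hY.isHermitian.eq]
    exact hY.trace_mul_nonneg (hpos _ (posSemidef_vecMulVec_self_star x))
  simpa using h.conjTranspose

lemma trace_adjoint_mul (hadj : ∀ X Y, trace (Yᴴ * N X) = trace ((Nadj Y)ᴴ * X))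
    (hpos : ∀ A, A.PosSemidef → (N A).PosSemidef) {Y : Matrix m m ℂ} (hY : Y.PosSemidef)
    (X : Matrix n n ℂ) : trace (Nadj Y * X) = trace (Y * N X) := by
  have h := hadj X Y
  rwa [hY.isHermitian.eq, (posSemidef_adjoint N Nadj hadj hpos hY).isHermitian.eq, eq_comm] at h

lemma adjoint_one (hadj : ∀ X Y, trace (Yᴴ * N X) = trace ((Nadj Y)ᴴ * X))
    (hTP : ∀ A, trace (N A) = trace A) : Nadj 1 = 1 := by
  rw [← conjTranspose_eq_one, ext_iff_trace_mul_right]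
  intro X
  rw [← hadj, conjTranspose_one, Matrix.one_mul, Matrix.one_mul, hTP]

theorem re_trace_mul_matLog_le_re_trace_mul_matLog_adjoint
    (hadj : ∀ X Y, trace (Yᴴ * N X) = trace ((Nadj Y)ᴴ * X))
    (hpos : ∀ A, A.PosSemidef → (N A).PosSemidef) (hTP : ∀ A, trace (N A) = trace A)
    {ρ : Matrix n n ℂ} (hρ : ρ.PosSemidef) (hNρ : (N ρ).PosDef) :
    (trace (N ρ * matLog (N ρ))).re ≤ (trace (ρ * matLog (Nadj (N ρ)))).re := by
  have hNadj : ∀ Y, Y.PosSemidef → (Nadj Y).PosSemidef :=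
    fun _ => posSemidef_adjoint N Nadj hadj hpos
  have hNadj1 := adjoint_one N Nadj hadj hTP
  have hA := hNρ.isHermitian
  have hBpd := hNρ.map_of_map_one Nadj hNadj hNadj1
  have hB := hBpd.isHermitian
  have htrace : ∀ f : ℝ → ℝ, (trace (N ρ * matFun f (N ρ))).re =
      ∑ i, hA.eigenvalues i * f (hA.eigenvalues i) := by
    intro f
    rw [hA.trace_mul_matFun_self, Complex.re_sum]
    simp only [Complex.ofReal_re]
  rw [matLog, matLog, htrace, hB.re_trace_mul_matFun]
  refine sum_mul_log_le_of_forall_sum_mul_inv_add_le hNρ.eigenvalues_pos hBpd.eigenvalues_pos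
    ?_ fun t ht => ?_
  · have h1 := htrace fun _ => 1
    have h2 := hB.re_trace_mul_matFun ρ fun _ => 1
    simp only [mul_one, hA.matFun_one, hB.matFun_one, hTP] at h1 h2
    rw [← h1, h2]
  · have key := hρ.trace_mul_mono
      (matFun_inv_add_map_le_map_matFun_inv_add Nadj hNadj hNadj1 hNρ.posSemidef ht)
    rw [trace_mul_comm ρ (Nadj _), trace_adjoint_mul N Nadj hadj hpos
      (hA.posSemidef_matFun (f := fun x => (x + t)⁻¹) fun i =>
        inv_nonneg.2 (by linarith [hNρ.eigenvalues_pos i])),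
      trace_mul_comm _ (N ρ)] at key
    have h := (Complex.le_def.1 key).1
    rwa [hB.re_trace_mul_matFun, htrace] at h

end PositiveMaps

theorem stmt_1_general {n m : Type*} [Fintype n] [DecidableEq n] [Fintype m] [DecidableEq m]
    (N : Matrix n n ℂ →ₗ[ℂ] Matrix m m ℂ) (Nadj : Matrix m m ℂ →ₗ[ℂ] Matrix n n ℂ)
    (hadj : ∀ (X : Matrix n n ℂ) (Y : Matrix m m ℂ),
      Matrix.trace (Yᴴ * N X) = Matrix.trace ((Nadj Y)ᴴ * X))
    (hpos : ∀ A : Matrix n n ℂ, A.PosSemidef → (N A).PosSemidef)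
    (hTP : ∀ A : Matrix n n ℂ, Matrix.trace (N A) = Matrix.trace A)
    (ρ : Matrix n n ℂ) (hρ : ρ.PosDef)
    (hNρ : (N ρ).PosDef) :
    vnEntropy (N ρ) - vnEntropy ρ ≥ relEnt ρ (Nadj (N ρ)) := by
  have key := re_trace_mul_matLog_le_re_trace_mul_matLog_adjoint N Nadj hadj hpos hTP
    hρ.posSemidef hNρ
  simp only [vnEntropy, relEnt, Matrix.mul_sub, trace_sub, Complex.sub_re]
  linarith

theorem stmt_1 {n m : Type*} [Fintype n] [DecidableEq n] [Fintype m] [DecidableEq m]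
    (N : Matrix n n ℂ →ₗ[ℂ] Matrix m m ℂ) (Nadj : Matrix m m ℂ →ₗ[ℂ] Matrix n n ℂ)
    (hadj : ∀ (X : Matrix n n ℂ) (Y : Matrix m m ℂ),
      Matrix.trace (Yᴴ * N X) = Matrix.trace ((Nadj Y)ᴴ * X))
    (hpos : ∀ A : Matrix n n ℂ, A.PosSemidef → (N A).PosSemidef)
    (hTP : ∀ A : Matrix n n ℂ, Matrix.trace (N A) = Matrix.trace A)
    (ρ : Matrix n n ℂ) (hρ : ρ.PosDef) (hρ1 : Matrix.trace ρ = 1)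
    (hNρ : (N ρ).PosDef) :
    vnEntropy (N ρ) - vnEntropy ρ ≥ relEnt ρ (Nadj (N ρ)) :=
  stmt_1_general N Nadj hadj hpos hTP ρ hρ hNρ
end

section
/- Tracial matrix Hölder inequality: for all matrices A, B ∈ M_n(ℂ) and p, q ∈ (1, ∞) with 1/p + 1/q = 1, |Tr(A† B)| ≤ ‖A‖_p ‖B‖_q, where ‖A‖_p = (Tr|A|^p)^{1/p} is the Schatten p-norm. -/
open scoped Matrix Kronecker ComplexOrder

/-!
Diagonalise `|A| = P diag(μ) P†` and `|B| = Q diag(ρ) Q†`. Since `(AP)†(AP) = diag(μ²)`, we can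
write `AP = V diag(μ)` with `V` a contraction, and likewise `BQ = X diag(ρ)`; hence
`Tr(A†B) = ∑ᵢⱼ μᵢ ρⱼ (V†X)ᵢⱼ (Q†P)ⱼᵢ`. Rows and columns of a contraction have `ℓ²`-norm at most
one, so by Cauchy–Schwarz the weights `dᵢⱼ = |(V†X)ᵢⱼ| |(Q†P)ⱼᵢ|` form a doubly substochastic
matrix, and Hölder's inequality for `∑ᵢⱼ (μᵢ dᵢⱼ^{1/p}) (ρⱼ dᵢⱼ^{1/q})` finishes the proof.
-/

open Matrix Finset

theorem Real.sum_sum_mul_mul_le_Lp_mul_Lq_of_substochastic {ι κ : Type*} [Fintype ι] [Fintype κ]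
    {p q : ℝ} (hpq : p.HolderConjugate q) {μ : ι → ℝ} {ρ : κ → ℝ} {d : ι → κ → ℝ}
    (hμ : ∀ i, 0 ≤ μ i) (hρ : ∀ j, 0 ≤ ρ j) (hd : ∀ i j, 0 ≤ d i j)
    (hrow : ∀ i, ∑ j, d i j ≤ 1) (hcol : ∀ j, ∑ i, d i j ≤ 1) :
    ∑ i, ∑ j, μ i * ρ j * d i j ≤ (∑ i, μ i ^ p) ^ (1 / p) * (∑ j, ρ j ^ q) ^ (1 / q) := by
  have rpow_one_div_rpow {r : ℝ} (hr : r ≠ 0) (a x : ℝ) (ha : 0 ≤ a) (hx : 0 ≤ x) :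
      (a * x ^ (1 / r)) ^ r = a ^ r * x := by
    rw [Real.mul_rpow ha (Real.rpow_nonneg hx _), ← Real.rpow_mul hx, one_div_mul_cancel hr,
      Real.rpow_one]
  -- Hölder on `ι × κ`, splitting the weight `d i j` as `d i j ^ (1/p) * d i j ^ (1/q)`
  set f : ι × κ → ℝ := fun x => μ x.1 * d x.1 x.2 ^ (1 / p)
  set g : ι × κ → ℝ := fun x => ρ x.2 * d x.1 x.2 ^ (1 / q)
  have hf : ∀ x ∈ univ, 0 ≤ f x := fun x _ => mul_nonneg (hμ _) (Real.rpow_nonneg (hd _ _) _)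
  have hg : ∀ x ∈ univ, 0 ≤ g x := fun x _ => mul_nonneg (hρ _) (Real.rpow_nonneg (hd _ _) _)
  have hfp : ∑ x, f x ^ p ≤ ∑ i, μ i ^ p := by
    simp only [f, Fintype.sum_prod_type, rpow_one_div_rpow hpq.ne_zero _ _ (hμ _) (hd _ _),
      ← mul_sum]
    exact sum_le_sum fun i _ => mul_le_of_le_one_right (Real.rpow_nonneg (hμ i) p) (hrow i)
  have hgq : ∑ x, g x ^ q ≤ ∑ j, ρ j ^ q := by
    simp only [g, Fintype.sum_prod_type_right, rpow_one_div_rpow hpq.symm.ne_zero _ _ (hρ _)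
      (hd _ _), ← mul_sum]
    exact sum_le_sum fun j _ => mul_le_of_le_one_right (Real.rpow_nonneg (hρ j) q) (hcol j)
  have hsum : 1 / p + 1 / q = 1 := by simpa only [one_div] using hpq.inv_add_inv_eq_one
  calc ∑ i, ∑ j, μ i * ρ j * d i j = ∑ x, f x * g x := by
        rw [Fintype.sum_prod_type]
        refine sum_congr rfl fun i _ => sum_congr rfl fun j _ => ?_
        rw [mul_mul_mul_comm, ← Real.rpow_add' (hd i j) (by rw [hsum]; exact one_ne_zero), hsum,
          Real.rpow_one]
    _ ≤ (∑ x, f x ^ p) ^ (1 / p) * (∑ x, g x ^ q) ^ (1 / q) :=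
        Real.inner_le_Lp_mul_Lq_of_nonneg univ hpq hf hg
    _ ≤ (∑ i, μ i ^ p) ^ (1 / p) * (∑ j, ρ j ^ q) ^ (1 / q) := by
        have hf' : 0 ≤ ∑ x, f x ^ p := sum_nonneg fun x hx => Real.rpow_nonneg (hf x hx) p
        have hg' : 0 ≤ ∑ x, g x ^ q := sum_nonneg fun x hx => Real.rpow_nonneg (hg x hx) q
        have := hpq.one_div_nonneg; have := hpq.symm.one_div_nonneg
        exact mul_le_mul (Real.rpow_le_rpow hf' hfp ‹_›) (Real.rpow_le_rpow hg' hgq ‹_›)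
          (Real.rpow_nonneg hg' _) (Real.rpow_nonneg (hf'.trans hfp) _)

section L2OpNorm

open scoped Matrix.Norms.L2Operator

variable {𝕜 m n : Type*} [RCLike 𝕜] [Fintype m] [Fintype n] [DecidableEq n]

namespace Matrix

lemma sum_norm_sq_col_le_l2_opNorm_sq (M : Matrix m n 𝕜) (j : n) :
    ∑ i, ‖M i j‖ ^ 2 ≤ ‖M‖ ^ 2 := by
  have h := M.l2_opNorm_mulVec (EuclideanSpace.single j 1)
  calc ∑ i, ‖M i j‖ ^ 2 = ‖(EuclideanSpace.equiv m 𝕜).symm (M *ᵥ Pi.single j 1)‖ ^ 2 := by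
        simp [EuclideanSpace.norm_sq_eq]
    _ ≤ ‖M‖ ^ 2 := by gcongr; simpa using h

lemma sum_norm_sq_row_le_l2_opNorm_sq [DecidableEq m] (M : Matrix m n 𝕜) (i : m) :
    ∑ j, ‖M i j‖ ^ 2 ≤ ‖M‖ ^ 2 := by
  simpa [l2_opNorm_conjTranspose] using Mᴴ.sum_norm_sq_col_le_l2_opNorm_sq i

lemma l2_opNorm_le_one_of_conjTranspose_mul_self_eq_diagonal {M : Matrix m n 𝕜} {e : n → 𝕜}
    (h : Mᴴ * M = diagonal e) (he : ∀ i, ‖e i‖ ≤ 1) : ‖M‖ ≤ 1 := by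
  have : ‖M‖ * ‖M‖ ≤ 1 := by
    rw [← l2_opNorm_conjTranspose_mul_self, h, l2_opNorm_diagonal]
    exact pi_norm_le_iff_of_nonneg zero_le_one |>.mpr he
  nlinarith [norm_nonneg M]

lemma l2_opNorm_le_one_of_mem_unitaryGroup {U : Matrix n n 𝕜} (hU : U ∈ unitaryGroup n 𝕜) :
    ‖U‖ ≤ 1 :=
  l2_opNorm_le_one_of_conjTranspose_mul_self_eq_diagonal (e := 1) hU.1 (by simp)

lemma exists_l2_opNorm_le_one_and_eq_mul_diagonal {W : Matrix m n 𝕜} {μ : n → ℝ}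
    (h : Wᴴ * W = diagonal fun i => (μ i : 𝕜) ^ 2) :
    ∃ V : Matrix m n 𝕜, ‖V‖ ≤ 1 ∧ W = V * diagonal fun i => (μ i : 𝕜) := by
  have hWD (d : n → ℝ) :
      (W * diagonal fun i => (d i : 𝕜))ᴴ * (W * diagonal fun i => (d i : 𝕜)) =
        diagonal fun i => ((d i * μ i ^ 2 * d i : ℝ) : 𝕜) := by
    rw [conjTranspose_mul, diagonal_conjTranspose, Matrix.mul_assoc, ← Matrix.mul_assoc Wᴴ,
      h, diagonal_mul_diagonal, diagonal_mul_diagonal]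
    congr 1; funext i
    simp only [Pi.star_apply, RCLike.star_def, RCLike.conj_ofReal]
    push_cast; ring
  refine ⟨W * diagonal fun i => (((μ i)⁻¹ : ℝ) : 𝕜), ?_, ?_⟩
  · refine l2_opNorm_le_one_of_conjTranspose_mul_self_eq_diagonal (hWD _) fun i => ?_
    rcases eq_or_ne (μ i) 0 with hi | hi
    · simp [hi]
    · rw [show (μ i)⁻¹ * μ i ^ 2 * (μ i)⁻¹ = 1 by field_simp]; simp
  · -- the columns of `W` where `μ` vanishes are zero
    have hker : W * diagonal (fun i => ((1 - (μ i)⁻¹ * μ i : ℝ) : 𝕜)) = 0 := by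
      refine conjTranspose_mul_self_eq_zero.mp ?_
      rw [hWD, ← diagonal_zero]
      congr 1; funext i
      rcases eq_or_ne (μ i) 0 with hi | hi <;> simp [hi]
    ext k i
    have hki := congrFun (congrFun hker k) i
    rw [mul_diagonal, zero_apply] at hki
    rw [Matrix.mul_assoc, diagonal_mul_diagonal, mul_diagonal]
    rcases eq_or_ne (μ i) 0 with hi | hi
    · simpa [hi] using hki
    · simp [hi]

lemma sum_norm_mul_norm_le_one {G H : Matrix n n 𝕜} (hG : ‖G‖ ≤ 1) (hH : ‖H‖ ≤ 1) (i : n) :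
    ∑ j, ‖G i j‖ * ‖H j i‖ ≤ 1 := by
  have hrow : ∑ j, ‖G i j‖ ^ 2 ≤ 1 :=
    (G.sum_norm_sq_row_le_l2_opNorm_sq i).trans (pow_le_one₀ (norm_nonneg G) hG)
  have hcol : ∑ j, ‖H j i‖ ^ 2 ≤ 1 :=
    (H.sum_norm_sq_col_le_l2_opNorm_sq i).trans (pow_le_one₀ (norm_nonneg H) hH)
  calc ∑ j, ‖G i j‖ * ‖H j i‖ ≤ √(∑ j, ‖G i j‖ ^ 2) * √(∑ j, ‖H j i‖ ^ 2) :=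
        Real.sum_mul_le_sqrt_mul_sqrt _ _ _
    _ ≤ 1 :=
        mul_le_one₀ (Real.sqrt_le_one.mpr hrow) (Real.sqrt_nonneg _) (Real.sqrt_le_one.mpr hcol)

theorem norm_trace_diagonal_mul_mul_diagonal_mul_le {G C : Matrix n n 𝕜} (hG : ‖G‖ ≤ 1)
    (hC : ‖C‖ ≤ 1) {p q : ℝ} (hpq : p.HolderConjugate q) {μ ρ : n → ℝ} (hμ : ∀ i, 0 ≤ μ i)
    (hρ : ∀ j, 0 ≤ ρ j) :
    ‖trace (diagonal (fun i => (μ i : 𝕜)) * G * diagonal (fun j => (ρ j : 𝕜)) * C)‖ ≤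
      (∑ i, μ i ^ p) ^ (1 / p) * (∑ j, ρ j ^ q) ^ (1 / q) := by
  calc ‖trace (diagonal (fun i => (μ i : 𝕜)) * G * diagonal (fun j => (ρ j : 𝕜)) * C)‖
      = ‖∑ i, ∑ j, (μ i : 𝕜) * G i j * ρ j * C j i‖ := by
        simp only [trace, diag_apply, mul_apply (M := _ * diagonal _), mul_diagonal, diagonal_mul]
    _ ≤ ∑ i, ∑ j, μ i * ρ j * (‖G i j‖ * ‖C j i‖) := by
        refine (norm_sum_le _ _).trans (sum_le_sum fun i _ => (norm_sum_le _ _).trans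
          (sum_le_sum fun j _ => le_of_eq ?_))
        simp only [norm_mul, norm_algebraMap', Real.norm_eq_abs, abs_of_nonneg (hμ i),
          abs_of_nonneg (hρ j)]
        ring
    _ ≤ (∑ i, μ i ^ p) ^ (1 / p) * (∑ j, ρ j ^ q) ^ (1 / q) :=
        Real.sum_sum_mul_mul_le_Lp_mul_Lq_of_substochastic hpq hμ hρ
          (fun _ _ => by positivity) (sum_norm_mul_norm_le_one hG hC)
          (fun j => by simpa only [mul_comm] using sum_norm_mul_norm_le_one hC hG j)

end Matrix

end L2OpNorm

lemma Matrix.trace_conjTranspose_mul_eq {𝕜 n : Type*} [RCLike 𝕜] [Fintype n] [DecidableEq n]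
    {A B V X P Q : Matrix n n 𝕜} (hP : P ∈ unitaryGroup n 𝕜) (hQ : Q ∈ unitaryGroup n 𝕜)
    {μ ρ : n → ℝ} (hA : A * P = V * diagonal fun i => (μ i : 𝕜))
    (hB : B * Q = X * diagonal fun j => (ρ j : 𝕜)) :
    trace (Aᴴ * B) =
      trace (diagonal (fun i => (μ i : 𝕜)) * (Vᴴ * X) * diagonal (fun j => (ρ j : 𝕜)) *
        (star Q * P)) := by
  have hμ : (diagonal fun i => (μ i : 𝕜))ᴴ = diagonal fun i => (μ i : 𝕜) := by
    simp [diagonal_conjTranspose, Pi.star_def]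
  calc trace (Aᴴ * B) = trace ((A * P)ᴴ * (B * Q) * (star Q * P)) := by
        rw [conjTranspose_mul, ← star_eq_conjTranspose P,
          show star P * Aᴴ * (B * Q) * (star Q * P) = star P * (Aᴴ * B * (Q * star Q) * P) by
            simp only [Matrix.mul_assoc],
          Unitary.mul_star_self_of_mem hQ, Matrix.mul_one, trace_mul_comm (star P),
          Matrix.mul_assoc, Unitary.mul_star_self_of_mem hP, Matrix.mul_one]
    _ = _ := by
        rw [hA, hB, conjTranspose_mul, hμ]
        simp only [Matrix.mul_assoc]

section MatAbs

variable {n : Type*} [Fintype n] [DecidableEq n]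

lemma matFun_eq_cfc (f : ℝ → ℝ) {M : Matrix n n ℂ} (hM : M.IsHermitian) :
    matFun f M = cfc f M := by
  rw [hM.cfc_eq, IsHermitian.cfc, Unitary.conjStarAlgAut_apply, matFun, dif_pos hM]
  rfl

lemma trace_matFun (f : ℝ → ℝ) {M : Matrix n n ℂ} (hM : M.IsHermitian) :
    trace (matFun f M) = ∑ i, (f (hM.eigenvalues i) : ℂ) := by
  rw [matFun, dif_pos hM, trace_mul_cycle, Matrix.UnitaryGroup.star_mul_self, one_mul,
    trace_diagonal]

section
open scoped Matrix.Norms.L2Operator MatrixOrder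

lemma matAbs_eq_cfcAbs (A : Matrix n n ℂ) : matAbs A = CFC.abs A := by
  rw [CFC.abs, CFC.sqrt_eq_real_sqrt _ (star_mul_self_nonneg A), cfcₙ_eq_cfc, matAbs,
    matFun_eq_cfc _ (isHermitian_conjTranspose_mul_self A)]
  rfl

lemma posSemidef_matAbs (A : Matrix n n ℂ) : (matAbs A).PosSemidef := by
  rw [matAbs_eq_cfcAbs]
  exact (CFC.abs_nonneg A).posSemidef

lemma matAbs_mul_self (A : Matrix n n ℂ) : matAbs A * matAbs A = Aᴴ * A := by
  rw [matAbs_eq_cfcAbs, CFC.abs_mul_abs]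
  rfl

end

lemma isHermitian_matAbs (A : Matrix n n ℂ) : (matAbs A).IsHermitian :=
  (posSemidef_matAbs A).isHermitian

lemma schattenNorm_eq_sum_eigenvalues_rpow (p : ℝ) (A : Matrix n n ℂ) :
    schattenNorm p A = (∑ i, (isHermitian_matAbs A).eigenvalues i ^ p) ^ (1 / p) := by
  rw [schattenNorm, trace_matFun _ (isHermitian_matAbs A), Complex.re_sum]
  simp only [Complex.ofReal_re]

open scoped Matrix.Norms.L2Operator in
lemma exists_mul_eigenvectorUnitary_matAbs_eq (A : Matrix n n ℂ) :
    ∃ V : Matrix n n ℂ, ‖V‖ ≤ 1 ∧ A * (isHermitian_matAbs A).eigenvectorUnitary =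
      V * diagonal fun i => ((isHermitian_matAbs A).eigenvalues i : ℂ) := by
  set U : Matrix n n ℂ := ((isHermitian_matAbs A).eigenvectorUnitary : Matrix n n ℂ)
  have hU : U * star U = 1 :=
    Unitary.mul_star_self_of_mem (isHermitian_matAbs A).eigenvectorUnitary.2
  have hdiag : star U * matAbs A * U =
      diagonal fun i => ((isHermitian_matAbs A).eigenvalues i : ℂ) := by
    simpa [Unitary.conjStarAlgAut_star_apply, Function.comp_def] using
      (isHermitian_matAbs A).conjStarAlgAut_star_eigenvectorUnitary
  refine exists_l2_opNorm_le_one_and_eq_mul_diagonal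
    (μ := (isHermitian_matAbs A).eigenvalues) ?_
  calc (A * U)ᴴ * (A * U) = star U * (matAbs A * (U * star U) * matAbs A) * U := by
        rw [hU, Matrix.mul_one, matAbs_mul_self, conjTranspose_mul, star_eq_conjTranspose]
        simp only [Matrix.mul_assoc]
    _ = (star U * matAbs A * U) * (star U * matAbs A * U) := by simp only [Matrix.mul_assoc]
    _ = _ := by rw [hdiag, diagonal_mul_diagonal]; simp only [sq]; rfl

end MatAbs

theorem stmt_7_general {n : Type*} [Fintype n] [DecidableEq n]
    (A B : Matrix n n ℂ) (p q : ℝ) (hp : 1 < p)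
    (hpq : 1 / p + 1 / q = 1) :
    ‖Matrix.trace (Aᴴ * B)‖ ≤ schattenNorm p A * schattenNorm q B := by
  have hpq' : p.HolderConjugate q :=
    Real.holderConjugate_iff.mpr ⟨hp, by simpa only [one_div] using hpq⟩
  obtain ⟨V, hV, hAV⟩ := exists_mul_eigenvectorUnitary_matAbs_eq A
  obtain ⟨X, hX, hBX⟩ := exists_mul_eigenvectorUnitary_matAbs_eq B
  rw [trace_conjTranspose_mul_eq (SetLike.coe_mem _) (SetLike.coe_mem _) hAV hBX,
    schattenNorm_eq_sum_eigenvalues_rpow, schattenNorm_eq_sum_eigenvalues_rpow]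
  refine norm_trace_diagonal_mul_mul_diagonal_mul_le ?_ ?_ hpq'
    (posSemidef_matAbs A).eigenvalues_nonneg (posSemidef_matAbs B).eigenvalues_nonneg
  · open scoped Matrix.Norms.L2Operator in
    exact (l2_opNorm_mul _ _).trans
      (mul_le_one₀ (by rwa [l2_opNorm_conjTranspose]) (norm_nonneg _) hX)
  · exact l2_opNorm_le_one_of_mem_unitaryGroup
      (mul_mem (Unitary.star_mem (SetLike.coe_mem _)) (SetLike.coe_mem _))

theorem stmt_7 {n : Type*} [Fintype n] [DecidableEq n]
    (A B : Matrix n n ℂ) (p q : ℝ) (hp : 1 < p) (hq : 1 < q)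
    (hpq : 1 / p + 1 / q = 1) :
    ‖Matrix.trace (Aᴴ * B)‖ ≤ schattenNorm p A * schattenNorm q B :=
  stmt_7_general A B p q hp hpq
end

section
/- Let N be a positive, sub-unital, trace-preserving linear map on matrices. Then for every density matrix ρ > 0 with N(ρ) > 0, the von Neumann entropy is non-decreasing: S(N(ρ)) ≥ S(ρ). -/
open scoped Matrix Kronecker ComplexOrder

/-
Write `ρ = ∑ aᵢ Pᵢ` and `N ρ = ∑ bⱼ Qⱼ` spectrally, with rank-one projections `Pᵢ`, `Qⱼ`. The
matrix `Mᵢⱼ = Re Tr (Qⱼ N(Pᵢ))` is entrywise nonnegative (positivity of `N`), has unit row sums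
(trace preservation) and column sums `Re Tr (Qⱼ N(1)) ≤ 1` (sub-unitality), and `bⱼ = ∑ᵢ Mᵢⱼ aᵢ`.
Jensen's inequality for the concave `η(x) = -x log x` with `η(0) = 0`, applied to each column of
this substochastic matrix, gives `∑ⱼ η(bⱼ) ≥ ∑ⱼ ∑ᵢ Mᵢⱼ η(aᵢ) = ∑ᵢ η(aᵢ)`.
-/

open Matrix

section ColumnProjection

variable {n 𝕜 : Type*} [Fintype n] [DecidableEq n] [RCLike 𝕜]

lemma Matrix.PosSemidef.trace_mul_nonneg_s8 {A B : Matrix n n 𝕜} (hA : A.PosSemidef)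
    (hB : B.PosSemidef) : 0 ≤ trace (A * B) := by
  obtain ⟨S, rfl⟩ : ∃ S : Matrix n n 𝕜, A = star S * S := by
    open scoped MatrixOrder in exact CStarAlgebra.nonneg_iff_eq_star_mul_self.mp hA.nonneg
  rw [mul_assoc, trace_mul_comm, star_eq_conjTranspose]
  exact (hB.mul_mul_conjTranspose_same S).trace_nonneg

def colProj (U : unitaryGroup n 𝕜) (i : n) : Matrix n n 𝕜 :=
  (U : Matrix n n 𝕜) * single i i 1 * star (U : Matrix n n 𝕜)

lemma posSemidef_colProj (U : unitaryGroup n 𝕜) (i : n) : (colProj U i).PosSemidef := by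
  have hE : (single i i (1 : 𝕜)).PosSemidef := by
    rw [← diagonal_single, posSemidef_diagonal_iff]
    intro k
    by_cases h : k = i <;> simp [h]
  simpa [colProj, star_eq_conjTranspose] using hE.mul_mul_conjTranspose_same (U : Matrix n n 𝕜)

lemma trace_colProj_mul (U : unitaryGroup n 𝕜) (i : n) (X : Matrix n n 𝕜) :
    trace (colProj U i * X) = (star (U : Matrix n n 𝕜) * X * U) i i := by
  rw [colProj, mul_assoc, trace_mul_comm, ← mul_assoc, trace_mul_single,
    MulOpposite.op_one, one_smul]

lemma trace_colProj (U : unitaryGroup n 𝕜) (i : n) : trace (colProj U i) = 1 := by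
  simpa using trace_colProj_mul U i 1

lemma sum_colProj (U : unitaryGroup n 𝕜) : ∑ i, colProj U i = 1 := by
  simp_rw [colProj, ← Finset.sum_mul, ← Finset.mul_sum, sum_single_one, mul_one]
  exact U.2.2

lemma conj_diagonal_eq_sum_colProj (U : unitaryGroup n 𝕜) (d : n → 𝕜) :
    (U : Matrix n n 𝕜) * diagonal d * star (U : Matrix n n 𝕜) = ∑ i, d i • colProj U i := by
  rw [← sum_single_eq_diagonal, Finset.mul_sum, Finset.sum_mul]
  refine Finset.sum_congr rfl fun i _ => ?_
  rw [colProj, ← Matrix.smul_mul, ← Matrix.mul_smul, smul_single, smul_eq_mul, mul_one]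

lemma Matrix.IsHermitian.eq_sum_eigenvalues_smul_colProj {A : Matrix n n 𝕜}
    (hA : A.IsHermitian) : A = ∑ i, (hA.eigenvalues i : 𝕜) • colProj hA.eigenvectorUnitary i := by
  conv_lhs => rw [hA.spectral_theorem, Unitary.conjStarAlgAut_apply]
  exact conj_diagonal_eq_sum_colProj _ _

lemma Matrix.IsHermitian.trace_colProj_mul_self {A : Matrix n n 𝕜} (hA : A.IsHermitian)
    (i : n) : trace (colProj hA.eigenvectorUnitary i * A) = hA.eigenvalues i := by
  have hdiag : star (hA.eigenvectorUnitary : Matrix n n 𝕜) * A *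
      (hA.eigenvectorUnitary : Matrix n n 𝕜) =
      diagonal (RCLike.ofReal ∘ hA.eigenvalues) := by
    rw [← hA.conjStarAlgAut_star_eigenvectorUnitary, Unitary.conjStarAlgAut_star_apply]
  rw [trace_colProj_mul, hdiag, diagonal_apply_eq, Function.comp_apply]

end ColumnProjection

section TransitionMatrix

variable {n 𝕜 : Type*} [Fintype n] [DecidableEq n] [RCLike 𝕜]
  {N : Matrix n n 𝕜 →ₗ[𝕜] Matrix n n 𝕜}

variable (N) in
def transitionMatrix (U V : unitaryGroup n 𝕜) (i j : n) : ℝ :=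
  RCLike.re (trace (colProj V j * N (colProj U i)))

lemma transitionMatrix_nonneg (hpos : ∀ A : Matrix n n 𝕜, A.PosSemidef → (N A).PosSemidef)
    (U V : unitaryGroup n 𝕜) (i j : n) : 0 ≤ transitionMatrix N U V i j :=
  (RCLike.nonneg_iff.mp
    ((posSemidef_colProj V j).trace_mul_nonneg_s8 (hpos _ (posSemidef_colProj U i)))).1

lemma sum_transitionMatrix_row (hTP : ∀ A : Matrix n n 𝕜, trace (N A) = trace A)
    (U V : unitaryGroup n 𝕜) (i : n) : ∑ j, transitionMatrix N U V i j = 1 := by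
  simp only [transitionMatrix, ← map_sum, ← trace_sum, ← Finset.sum_mul, sum_colProj, one_mul,
    hTP, trace_colProj, RCLike.one_re]

lemma sum_transitionMatrix_col_le_one (hsub : (1 - N 1).PosSemidef)
    (U V : unitaryGroup n 𝕜) (j : n) : ∑ i, transitionMatrix N U V i j ≤ 1 := by
  have h := (RCLike.nonneg_iff.mp ((posSemidef_colProj V j).trace_mul_nonneg_s8 hsub)).1
  rw [mul_sub, trace_sub, map_sub, mul_one, trace_colProj, RCLike.one_re, sub_nonneg] at h
  simpa only [transitionMatrix, ← map_sum, ← trace_sum, ← Finset.mul_sum, sum_colProj] using h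

lemma eigenvalues_map_eq_sum_transitionMatrix_mul {A : Matrix n n 𝕜} (hA : A.IsHermitian)
    (hNA : (N A).IsHermitian) (j : n) :
    hNA.eigenvalues j =
      ∑ i, transitionMatrix N hA.eigenvectorUnitary hNA.eigenvectorUnitary i j *
        hA.eigenvalues i := by
  have hexpand (Q : Matrix n n 𝕜) : trace (Q * N A) =
      ∑ i, (hA.eigenvalues i : 𝕜) * trace (Q * N (colProj hA.eigenvectorUnitary i)) := by
    conv_lhs => rw [hA.eq_sum_eigenvalues_smul_colProj]
    simp only [map_sum, map_smul, Finset.mul_sum, Matrix.mul_smul, trace_sum, trace_smul,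
      smul_eq_mul]
  rw [← RCLike.ofReal_re (K := 𝕜) (hNA.eigenvalues j), ← hNA.trace_colProj_mul_self j, hexpand,
    map_sum]
  simp only [RCLike.re_ofReal_mul, transitionMatrix, mul_comm]

end TransitionMatrix

lemma ConcaveOn.sum_mul_le_map_sum_of_sum_le_one {ι : Type*} [Fintype ι] {f : ℝ → ℝ}
    (hf : ConcaveOn ℝ (Set.Ici 0) f) (hf0 : 0 ≤ f 0) {w a : ι → ℝ} (hw : ∀ i, 0 ≤ w i)
    (hw1 : ∑ i, w i ≤ 1) (ha : ∀ i, 0 ≤ a i) :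
    ∑ i, w i * f (a i) ≤ f (∑ i, w i * a i) := by
  -- Jensen's inequality after putting the missing mass `1 - ∑ w` on the point `0`
  have h := hf.le_map_sum (t := Finset.univ)
    (w := fun o : Option ι => o.elim (1 - ∑ i, w i) w) (p := fun o => o.elim 0 a)
    (fun o _ => by cases o with
      | none => simpa using hw1
      | some i => exact hw i)
    (by simp [Fintype.sum_option])
    (fun o _ => by cases o with
      | none => exact Set.self_mem_Ici
      | some i => exact ha i)
  simp only [Fintype.sum_option, Option.elim, smul_eq_mul, mul_zero, zero_add] at h
  nlinarith [mul_nonneg (sub_nonneg.2 hw1) hf0]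

lemma ConcaveOn.sum_map_le_sum_map_of_substochastic {ι κ : Type*} [Fintype ι] [Fintype κ]
    {f : ℝ → ℝ} (hf : ConcaveOn ℝ (Set.Ici 0) f) (hf0 : 0 ≤ f 0) {M : ι → κ → ℝ}
    (hM : ∀ i j, 0 ≤ M i j) (hrow : ∀ i, ∑ j, M i j = 1) (hcol : ∀ j, ∑ i, M i j ≤ 1)
    {a : ι → ℝ} {b : κ → ℝ} (ha : ∀ i, 0 ≤ a i) (hb : ∀ j, b j = ∑ i, M i j * a i) :
    ∑ i, f (a i) ≤ ∑ j, f (b j) :=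
  calc ∑ i, f (a i) = ∑ j, ∑ i, M i j * f (a i) := by
        rw [Finset.sum_comm]
        simp only [← Finset.sum_mul, hrow, one_mul]
    _ ≤ ∑ j, f (b j) := Finset.sum_le_sum fun j _ =>
        hb j ▸ hf.sum_mul_le_map_sum_of_sum_le_one hf0 (hM · j) (hcol j) ha

lemma vnEntropy_eq_sum_negMulLog {n : Type*} [Fintype n] [DecidableEq n] {A : Matrix n n ℂ}
    (hA : A.IsHermitian) : vnEntropy A = ∑ i, Real.negMulLog (hA.eigenvalues i) := by
  have hlog : matLog A =
      ∑ i, (Real.log (hA.eigenvalues i) : ℂ) • colProj hA.eigenvectorUnitary i := by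
    rw [matLog, matFun, dif_pos hA]
    exact conj_diagonal_eq_sum_colProj _ _
  rw [vnEntropy, trace_mul_comm, hlog, Finset.sum_mul, trace_sum, Complex.re_sum,
    ← Finset.sum_neg_distrib]
  refine Finset.sum_congr rfl fun i _ => ?_
  rw [smul_mul_assoc, trace_smul, hA.trace_colProj_mul_self, smul_eq_mul]
  simp only [Complex.coe_algebraMap, Complex.mul_re, Complex.ofReal_re, Complex.ofReal_im,
    mul_zero, sub_zero, Real.negMulLog, neg_mul, mul_comm]

theorem stmt_8_general {n : Type*} [Fintype n] [DecidableEq n]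
    (N : Matrix n n ℂ →ₗ[ℂ] Matrix n n ℂ)
    (hpos : ∀ A : Matrix n n ℂ, A.PosSemidef → (N A).PosSemidef)
    (hTP : ∀ A : Matrix n n ℂ, Matrix.trace (N A) = Matrix.trace A)
    (hsub : ((1 : Matrix n n ℂ) - N 1).PosSemidef)
    (ρ : Matrix n n ℂ) (hρ : ρ.PosDef) :
    vnEntropy (N ρ) ≥ vnEntropy ρ := by
  have hρH : ρ.IsHermitian := hρ.isHermitian
  have hNρH : (N ρ).IsHermitian := (hpos ρ hρ.posSemidef).isHermitian
  rw [ge_iff_le, vnEntropy_eq_sum_negMulLog hρH, vnEntropy_eq_sum_negMulLog hNρH]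
  exact Real.concaveOn_negMulLog.sum_map_le_sum_map_of_substochastic (by simp)
    (transitionMatrix_nonneg hpos _ _) (sum_transitionMatrix_row hTP _ _)
    (sum_transitionMatrix_col_le_one hsub _ _) (fun i => (hρ.eigenvalues_pos i).le)
    (eigenvalues_map_eq_sum_transitionMatrix_mul hρH hNρH)

theorem stmt_8 {n : Type*} [Fintype n] [DecidableEq n]
    (N : Matrix n n ℂ →ₗ[ℂ] Matrix n n ℂ)
    (hpos : ∀ A : Matrix n n ℂ, A.PosSemidef → (N A).PosSemidef)
    (hTP : ∀ A : Matrix n n ℂ, Matrix.trace (N A) = Matrix.trace A)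
    (hsub : ((1 : Matrix n n ℂ) - N 1).PosSemidef)
    (ρ : Matrix n n ℂ) (hρ : ρ.PosDef) (hρ1 : Matrix.trace ρ = 1)
    (hNρ : (N ρ).PosDef) :
    vnEntropy (N ρ) ≥ vnEntropy ρ :=
  stmt_8_general N hpos hTP hsub ρ hρ
end

section
/- Under the same hypotheses (semigroup of unital, self-adjoint, positive, trace-preserving maps M_t, positive definite ρ_0 with ρ_t = M_t(ρ_0) > 0), the entropy change satisfies S(ρ_t) − S(ρ_0) ≥ D(ρ_0 ‖ ρ_{2t}). -/
open scoped Matrix Kronecker ComplexOrder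

/-!
Put `σ = M_t ρ₀`. Self-adjointness of `M_t` gives `tr (σ log σ) = tr (ρ₀ M_t(log σ))`, and
`M_t σ = ρ_{2t}`, so the claim is the trace form `tr (ρ Φ(log σ)) ≤ tr (ρ log Φ(σ))` of Jensen's
operator inequality for the unital positive map `Φ = M_t`. Through
`log x = ∫₀^∞ ((1 + s)⁻¹ - (x + s)⁻¹) ds` this reduces to Choi's inequality
`Φ(A)⁻¹ ≤ Φ(A⁻¹)` for the resolvents `A = σ + s`, `s ≥ 0`.
-/

open Matrix

section Spectral

variable {n : Type*} [Fintype n] [DecidableEq n]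

lemma Matrix.diagonal_ofReal_eq_sum (c : n → ℝ) :
    diagonal (fun i => (c i : ℂ)) = ∑ i, c i • diagonal (Pi.single i 1 : n → ℂ) := by
  ext j k
  by_cases h : j = k <;> simp [Matrix.sum_apply, Pi.single_apply, h]

namespace Matrix.IsHermitian

variable {A : Matrix n n ℂ}

noncomputable def eigenProj (hA : A.IsHermitian) (i : n) : Matrix n n ℂ :=
  Unitary.conjStarAlgAut ℝ _ hA.eigenvectorUnitary (diagonal (Pi.single i 1))

lemma sum_smul_eigenProj (hA : A.IsHermitian) (c : n → ℝ) :
    ∑ i, c i • hA.eigenProj i =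
      Unitary.conjStarAlgAut ℝ _ hA.eigenvectorUnitary (diagonal (fun i => (c i : ℂ))) := by
  simp only [eigenProj, diagonal_ofReal_eq_sum, map_sum, map_smul]

lemma sum_eigenProj (hA : A.IsHermitian) : ∑ i, hA.eigenProj i = 1 := by
  simpa using hA.sum_smul_eigenProj 1

lemma sum_smul_eigenProj_mul (hA : A.IsHermitian) (c d : n → ℝ) :
    (∑ i, c i • hA.eigenProj i) * ∑ i, d i • hA.eigenProj i =
      ∑ i, (c i * d i) • hA.eigenProj i := by
  simp only [sum_smul_eigenProj, ← map_mul, diagonal_mul_diagonal, Complex.ofReal_mul]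

lemma inv_sum_smul_eigenProj (hA : A.IsHermitian) {c : n → ℝ} (hc : ∀ i, c i ≠ 0) :
    (∑ i, c i • hA.eigenProj i)⁻¹ = ∑ i, (c i)⁻¹ • hA.eigenProj i := by
  refine inv_eq_right_inv ?_
  simp only [sum_smul_eigenProj_mul, mul_inv_cancel₀ (hc _), one_smul, sum_eigenProj]

lemma eq_sum_eigenProj (hA : A.IsHermitian) : A = ∑ i, hA.eigenvalues i • hA.eigenProj i := by
  rw [sum_smul_eigenProj]
  exact hA.spectral_theorem

lemma matFun_eq_sum_eigenProj (hA : A.IsHermitian) (f : ℝ → ℝ) :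
    matFun f A = ∑ i, f (hA.eigenvalues i) • hA.eigenProj i := by
  rw [matFun, dif_pos hA, sum_smul_eigenProj]
  rfl

lemma add_smul_one_eq_sum_eigenProj (hA : A.IsHermitian) (s : ℝ) :
    A + s • (1 : Matrix n n ℂ) = ∑ i, (hA.eigenvalues i + s) • hA.eigenProj i := by
  conv_lhs => rw [hA.eq_sum_eigenProj, ← hA.sum_eigenProj]
  simp only [Finset.smul_sum, ← Finset.sum_add_distrib, add_smul]

lemma inv_add_smul_one_eq_sum_eigenProj (hA : A.IsHermitian) {s : ℝ}
    (hs : ∀ i, hA.eigenvalues i + s ≠ 0) :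
    (A + s • (1 : Matrix n n ℂ))⁻¹ = ∑ i, (hA.eigenvalues i + s)⁻¹ • hA.eigenProj i := by
  rw [hA.add_smul_one_eq_sum_eigenProj, hA.inv_sum_smul_eigenProj hs]

lemma eigenProj_posSemidef (hA : A.IsHermitian) (i : n) : (hA.eigenProj i).PosSemidef := by
  have : (diagonal (Pi.single i 1 : n → ℂ)).PosSemidef :=
    PosSemidef.diagonal fun j => by by_cases h : j = i <;> simp [h]
  simpa [eigenProj, star_eq_conjTranspose] using this.mul_mul_conjTranspose_same _

lemma posSemidef_sum_smul_eigenProj (hA : A.IsHermitian) {c : n → ℝ} (hc : ∀ i, 0 ≤ c i) :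
    (∑ i, c i • hA.eigenProj i).PosSemidef :=
  posSemidef_sum _ fun i _ => (hA.eigenProj_posSemidef i).smul (hc i)

lemma isHermitian_matFun (hA : A.IsHermitian) (f : ℝ → ℝ) : (matFun f A).IsHermitian := by
  rw [hA.matFun_eq_sum_eigenProj]
  exact isSelfAdjoint_sum _ fun i _ => (hA.eigenProj_posSemidef i).1.smul (IsSelfAdjoint.all _)

end Matrix.IsHermitian

lemma Matrix.PosDef.exists_posSemidef_sub_smul_one {A : Matrix n n ℂ} (hA : A.PosDef) :
    ∃ ε : ℝ, 0 < ε ∧ (A - ε • (1 : Matrix n n ℂ)).PosSemidef := by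
  obtain ⟨ε, hε, hle⟩ : ∃ ε : ℝ, 0 < ε ∧ ∀ i, ε ≤ hA.1.eigenvalues i := by
    rcases isEmpty_or_nonempty n with hn | hn
    · exact ⟨1, one_pos, isEmptyElim⟩
    · exact ⟨Finset.univ.inf' Finset.univ_nonempty hA.1.eigenvalues,
        (Finset.lt_inf'_iff _).mpr fun i _ => hA.eigenvalues_pos i,
        fun i => Finset.inf'_le _ (Finset.mem_univ i)⟩
  refine ⟨ε, hε, ?_⟩
  rw [sub_eq_add_neg, ← neg_smul, hA.1.add_smul_one_eq_sum_eigenProj]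
  exact hA.1.posSemidef_sum_smul_eigenProj fun i => by linarith [hle i]

lemma Matrix.PosSemidef.fromBlocks_smul {Q : Matrix n n ℂ} (hQ : Q.PosSemidef) {l : ℝ}
    (hl : 0 < l) : (fromBlocks (l • Q) Q Q (l⁻¹ • Q)).PosSemidef := by
  convert (hQ.smul hl.le).conjTranspose_mul_mul_same
    (fromCols (1 : Matrix n n ℂ) (l⁻¹ • (1 : Matrix n n ℂ))) using 1
  rw [conjTranspose_fromCols_eq_fromRows_conjTranspose, fromRows_mul, fromRows_mul_fromCols]
  simp [smul_smul, hl.ne']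

end Spectral

section Trace

variable {n : Type*} [Fintype n]

open scoped MatrixOrder in
lemma Matrix.PosSemidef.re_trace_mul_nonneg {A B : Matrix n n ℂ} (hA : A.PosSemidef)
    (hB : B.PosSemidef) : 0 ≤ (A * B).trace.re := by
  classical
  obtain ⟨C, rfl⟩ := CStarAlgebra.nonneg_iff_eq_star_mul_self.mp hB.nonneg
  rw [star_eq_conjTranspose, ← Matrix.mul_assoc, trace_mul_comm, ← Matrix.mul_assoc]
  exact (Complex.nonneg_iff.mp (hA.mul_mul_conjTranspose_same C).trace_nonneg).1

lemma re_trace_mul_sum {ι : Type*} (s : Finset ι) (A : Matrix n n ℂ) (X : ι → Matrix n n ℂ) :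
    (A * ∑ i ∈ s, X i).trace.re = ∑ i ∈ s, (A * X i).trace.re := by
  simp [Finset.mul_sum, trace_sum, Complex.re_sum]

lemma re_trace_mul_sum_smul {ι : Type*} (s : Finset ι) (A : Matrix n n ℂ) (c : ι → ℝ)
    (X : ι → Matrix n n ℂ) :
    (A * ∑ i ∈ s, c i • X i).trace.re = ∑ i ∈ s, c i * (A * X i).trace.re := by
  simp [Finset.mul_sum, trace_sum, Complex.re_sum, trace_smul]

end Trace

section Logarithm

open Filter Topology Real

lemma tendsto_log_add_sub_log (a : ℝ) : Tendsto (fun T => log (a + T) - log T) atTop (𝓝 0) := by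
  have h : Tendsto (fun T : ℝ => log (1 + a * T⁻¹)) atTop (𝓝 0) := by
    have h1 : Tendsto (fun T : ℝ => 1 + a * T⁻¹) atTop (𝓝 1) := by
      simpa using (tendsto_inv_atTop_zero.const_mul a).const_add 1
    simpa [Function.comp_def] using (continuousAt_log one_ne_zero).tendsto.comp h1
  refine h.congr' ?_
  filter_upwards [eventually_gt_atTop (max 0 (-a))] with T hT
  have hT0 : 0 < T := (le_max_left _ _).trans_lt hT
  have haT : 0 < a + T := by linarith [le_max_right 0 (-a)]
  rw [← log_div haT.ne' hT0.ne']
  congr 1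
  field_simp
  ring

lemma sum_log_mul_le_of_forall_sum_inv_mul_le {ι κ : Type*} [Fintype ι] [Fintype κ]
    {lam q : ι → ℝ} {mu r : κ → ℝ} (hlam : ∀ i, 0 < lam i) (hmu : ∀ j, 0 < mu j)
    (hqr : ∑ i, q i = ∑ j, r j)
    (hres : ∀ s, 0 ≤ s → ∑ j, (mu j + s)⁻¹ * r j ≤ ∑ i, (lam i + s)⁻¹ * q i) :
    ∑ i, log (lam i) * q i ≤ ∑ j, log (mu j) * r j := by
  -- `G' ≥ 0` on `[0, ∞)` by `hres`, and `G → 0` because the weights have equal sums.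
  set G : ℝ → ℝ := fun T => ∑ i, log (lam i + T) * q i - ∑ j, log (mu j + T) * r j
  have hG_deriv : ∀ T, 0 ≤ T →
      HasDerivAt G (∑ i, (lam i + T)⁻¹ * q i - ∑ j, (mu j + T)⁻¹ * r j) T := by
    intro T hT
    have hlog {c : ℝ} (hc : 0 < c) (w : ℝ) :
        HasDerivAt (fun x => log (c + x) * w) ((c + T)⁻¹ * w) T := by
      simpa using (((hasDerivAt_id T).const_add c).log (by simp; linarith)).mul_const w
    exact (HasDerivAt.fun_sum fun i _ => hlog (hlam i) (q i)).sub
      (HasDerivAt.fun_sum fun j _ => hlog (hmu j) (r j))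
  have hG_mono : MonotoneOn G (Set.Ici 0) :=
    monotoneOn_of_hasDerivWithinAt_nonneg (convex_Ici 0)
      (fun T hT => (hG_deriv T hT).continuousAt.continuousWithinAt)
      (fun T hT => (hG_deriv T (interior_subset hT)).hasDerivWithinAt)
      (fun T hT => sub_nonneg.mpr (hres T (interior_subset hT)))
  have hG_lim : Tendsto G atTop (𝓝 0) := by
    have h := (tendsto_finsetSum Finset.univ fun i _ =>
        (tendsto_log_add_sub_log (lam i)).mul_const (q i)).sub
      (tendsto_finsetSum Finset.univ fun j _ => (tendsto_log_add_sub_log (mu j)).mul_const (r j))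
    simp only [zero_mul, Finset.sum_const_zero, sub_zero] at h
    refine h.congr fun T => ?_
    simp only [G, sub_mul, Finset.sum_sub_distrib, ← Finset.mul_sum, hqr]
    ring
  have := ge_of_tendsto hG_lim (by
    filter_upwards [eventually_ge_atTop 0] with T hT
    exact hG_mono (Set.mem_Ici.mpr le_rfl) hT hT)
  simpa [G] using this

end Logarithm

section PositiveMap

variable {n : Type*} [Fintype n] [DecidableEq n] {Φ : Matrix n n ℂ →ₗ[ℂ] Matrix n n ℂ}

lemma isHermitian_apply_of_isHermitian
    (hpos : ∀ A : Matrix n n ℂ, A.PosSemidef → (Φ A).PosSemidef)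
    {X : Matrix n n ℂ} (hX : X.IsHermitian) : (Φ X).IsHermitian := by
  rw [hX.eq_sum_eigenProj, map_sum]
  refine isSelfAdjoint_sum _ fun i _ => ?_
  rw [LinearMap.map_smul_of_tower]
  exact (hpos _ (hX.eigenProj_posSemidef i)).1.smul (IsSelfAdjoint.all _)

lemma posDef_apply_of_posDef (hpos : ∀ A : Matrix n n ℂ, A.PosSemidef → (Φ A).PosSemidef)
    (hone : Φ 1 = 1) {A : Matrix n n ℂ} (hA : A.PosDef) : (Φ A).PosDef := by
  obtain ⟨ε, hε, hAε⟩ := hA.exists_posSemidef_sub_smul_one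
  have : Φ A = Φ (A - ε • 1) + ε • 1 := by
    rw [map_sub, LinearMap.map_smul_of_tower, hone, sub_add_cancel]
  rw [this]
  exact (PosDef.one.smul hε).posSemidef_add (hpos _ hAε)

/-- Choi's inequality. Splitting `A` into its spectral projections `P i` writes
`fromBlocks (Φ A) 1 1 (Φ A⁻¹)` as a sum of positive blocks `[[λ Φ P, Φ P], [Φ P, λ⁻¹ Φ P]]`;
the claim is its Schur complement. -/
lemma posSemidef_apply_inv_sub_inv_apply
    (hpos : ∀ A : Matrix n n ℂ, A.PosSemidef → (Φ A).PosSemidef) (hone : Φ 1 = 1)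
    {A : Matrix n n ℂ} (hA : A.PosDef) : (Φ A⁻¹ - (Φ A)⁻¹).PosSemidef := by
  set P := hA.1.eigenProj
  set lam := hA.1.eigenvalues
  have hΦA : Φ A = ∑ i, lam i • Φ (P i) := by
    conv_lhs => rw [hA.1.eq_sum_eigenProj]
    simp only [map_sum, LinearMap.map_smul_of_tower, P, lam]
  have hΦinv : Φ A⁻¹ = ∑ i, (lam i)⁻¹ • Φ (P i) := by
    conv_lhs => rw [hA.1.eq_sum_eigenProj,
      hA.1.inv_sum_smul_eigenProj fun i => (hA.eigenvalues_pos i).ne']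
    simp only [map_sum, LinearMap.map_smul_of_tower, P, lam]
  have hblock : fromBlocks (Φ A) 1 1 (Φ A⁻¹) =
      ∑ i, fromBlocks (lam i • Φ (P i)) (Φ (P i)) (Φ (P i)) ((lam i)⁻¹ • Φ (P i)) := by
    rw [← hone, ← hA.1.sum_eigenProj, map_sum, hΦA, hΦinv]
    ext (i | i) (j | j) <;> simp [Matrix.sum_apply, P]
  have hW : (fromBlocks (Φ A) 1 1ᴴ (Φ A⁻¹)).PosSemidef := by
    rw [conjTranspose_one, hblock]
    exact posSemidef_sum _ fun i _ =>
      (hpos _ (hA.1.eigenProj_posSemidef i)).fromBlocks_smul (hA.eigenvalues_pos i)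
  have hΦA_pos := posDef_apply_of_posDef hpos hone hA
  have := hΦA_pos.isUnit.invertible
  simpa using (PosDef.fromBlocks₁₁ 1 (Φ A⁻¹) hΦA_pos).mp hW

lemma re_trace_mul_apply_matLog_le
    (hpos : ∀ A : Matrix n n ℂ, A.PosSemidef → (Φ A).PosSemidef) (hone : Φ 1 = 1)
    {σ ρ : Matrix n n ℂ} (hσ : σ.PosDef) (hρ : ρ.PosSemidef) :
    (ρ * Φ (matLog σ)).trace.re ≤ (ρ * matLog (Φ σ)).trace.re := by
  have hτ := posDef_apply_of_posDef hpos hone hσ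
  have hΦsmul (c : ℝ) (X : Matrix n n ℂ) : Φ (c • X) = c • Φ X := LinearMap.map_smul_of_tower ..
  rw [matLog, matLog, hσ.1.matFun_eq_sum_eigenProj, map_sum, hτ.1.matFun_eq_sum_eigenProj]
  simp only [hΦsmul, re_trace_mul_sum_smul]
  refine sum_log_mul_le_of_forall_sum_inv_mul_le hσ.eigenvalues_pos hτ.eigenvalues_pos ?_ ?_
  · rw [← re_trace_mul_sum, ← re_trace_mul_sum, ← map_sum, hσ.1.sum_eigenProj, hone,
      hτ.1.sum_eigenProj]
  · intro s hs
    have hA : (σ + s • 1).PosDef := hσ.add_posSemidef (PosSemidef.one.smul hs)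
    have hΦA : Φ (σ + s • 1) = Φ σ + s • 1 := by rw [map_add, hΦsmul, hone]
    have h := hρ.re_trace_mul_nonneg (posSemidef_apply_inv_sub_inv_apply hpos hone hA)
    rw [hΦA, hσ.1.inv_add_smul_one_eq_sum_eigenProj (fun i => by linarith [hσ.eigenvalues_pos i]),
      hτ.1.inv_add_smul_one_eq_sum_eigenProj (fun j => by linarith [hτ.eigenvalues_pos j]),
      map_sum, mul_sub, trace_sub, Complex.sub_re] at h
    simp only [hΦsmul, re_trace_mul_sum_smul] at h
    linarith

end PositiveMap

theorem stmt_13_general {n : Type*} [Fintype n] [DecidableEq n]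
    (M : ℝ → (Matrix n n ℂ →ₗ[ℂ] Matrix n n ℂ))
    (hsemi : ∀ s t : ℝ, 0 ≤ s → 0 ≤ t → (M s) ∘ₗ (M t) = M (s + t))
    (hunital : ∀ t : ℝ, 0 ≤ t → M t 1 = 1)
    (hsa : ∀ t : ℝ, 0 ≤ t → ∀ X Y : Matrix n n ℂ,
      Matrix.trace (Yᴴ * M t X) = Matrix.trace ((M t Y)ᴴ * X))
    (hpos : ∀ t : ℝ, 0 ≤ t → ∀ A : Matrix n n ℂ, A.PosSemidef → (M t A).PosSemidef)
    (ρ0 : Matrix n n ℂ) (hρ0 : ρ0.PosDef)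
    (t : ℝ) (ht : 0 ≤ t) :
    vnEntropy (M t ρ0) - vnEntropy ρ0 ≥ relEnt ρ0 (M (2 * t) ρ0) := by
  set σ := M t ρ0
  have hσ : σ.PosDef := posDef_apply_of_posDef (hpos t ht) (hunital t ht) hρ0
  have h2t : M (2 * t) ρ0 = M t σ := by rw [two_mul, ← hsemi t t ht ht]; rfl
  have hlog : (matLog σ).IsHermitian := hσ.1.isHermitian_matFun _
  have hMlog : (M t (matLog σ)).IsHermitian := isHermitian_apply_of_isHermitian (hpos t ht) hlog
  have hdual : (σ * matLog σ).trace = (ρ0 * M t (matLog σ)).trace :=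
    calc (σ * matLog σ).trace = ((matLog σ)ᴴ * M t ρ0).trace := by rw [hlog.eq, trace_mul_comm]
      _ = ((M t (matLog σ))ᴴ * ρ0).trace := hsa t ht ρ0 _
      _ = (ρ0 * M t (matLog σ)).trace := by rw [hMlog.eq, trace_mul_comm]
  have hjensen := re_trace_mul_apply_matLog_le (hpos t ht) (hunital t ht) hσ hρ0.posSemidef
  rw [ge_iff_le, vnEntropy, vnEntropy, relEnt, h2t, mul_sub, trace_sub, Complex.sub_re, hdual]
  linarith

theorem stmt_13 {n : Type*} [Fintype n] [DecidableEq n]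
    (M : ℝ → (Matrix n n ℂ →ₗ[ℂ] Matrix n n ℂ))
    (hsemi : ∀ s t : ℝ, 0 ≤ s → 0 ≤ t → (M s) ∘ₗ (M t) = M (s + t))
    (hunital : ∀ t : ℝ, 0 ≤ t → M t 1 = 1)
    (hsa : ∀ t : ℝ, 0 ≤ t → ∀ X Y : Matrix n n ℂ,
      Matrix.trace (Yᴴ * M t X) = Matrix.trace ((M t Y)ᴴ * X))
    (hpos : ∀ t : ℝ, 0 ≤ t → ∀ A : Matrix n n ℂ, A.PosSemidef → (M t A).PosSemidef)
    (hTP : ∀ t : ℝ, 0 ≤ t → ∀ A : Matrix n n ℂ, Matrix.trace (M t A) = Matrix.trace A)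
    (ρ0 : Matrix n n ℂ) (hρ0 : ρ0.PosDef) (hρ01 : Matrix.trace ρ0 = 1)
    (hρt : ∀ t : ℝ, 0 ≤ t → (M t ρ0).PosDef)
    (t : ℝ) (ht : 0 ≤ t) :
    vnEntropy (M t ρ0) - vnEntropy ρ0 ≥ relEnt ρ0 (M (2 * t) ρ0) :=
  stmt_13_general M hsemi hunital hsa hpos ρ0 hρ0 t ht
end
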